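/- Fix n ≥ 1. Let A_1 be the 2n×2n real matrix with entries (A_1)_{2k−1,2k} = (A_1)_{2k,2k−1} = 1 for 1 ≤ k ≤ n, (A_1)_{2k,2k+1} = (A_1)_{2k+1,2k} = −1 for 1 ≤ k ≤ n−1, and 0 elsewhere. Then the characteristic polynomial of A_1² equals g_n(x)², i.e. det(xI_{2n} − A_1²) = g_n(x)². -/

import Mathlib

/-!
Listing the vertices of the path as the even ones followed by the odd ones puts `A_1` into the
bipartite form `[[0, C], [Cᵀ, 0]]` with `C = 1 - N`, `N` the nilpotent down-shift, so
`A_1² = diag(C Cᵀ, Cᵀ C)`. The two blocks have the same characteristic polynomial, and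
`x - Cᵀ C` is tridiagonal with unit off-diagonals and diagonal `x - 2`, except `x - 1` in the
last entry; expanding along the first row shows that its determinant obeys the recurrence
of `g_n`.
-/

open Kronecker Matrix

/-- A matrix `M` has real eigenvalue `μ` if `M x = μ x` for some nonzero vector `x`. -/
def HasEig {I : Type*} [Fintype I] (M : Matrix I I ℝ) (μ : ℝ) : Prop :=
  ∃ x : I → ℝ, x ≠ 0 ∧ M.mulVec x = μ • x

/-- The signed adjacency matrix `A_1` of the path `P_{2n}`: in 1-indexed terms,
`(A_1)_{2k−1,2k} = (A_1)_{2k,2k−1} = 1` for `1 ≤ k ≤ n` and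
`(A_1)_{2k,2k+1} = (A_1)_{2k+1,2k} = −1` for `1 ≤ k ≤ n−1`, zero elsewhere.
On the 0-indexed `Fin (2n)`, the entry at `(i, i+1)` is `1` when `i` is even and
`−1` when `i` is odd. -/
def signedPath (n : ℕ) : Matrix (Fin (2 * n)) (Fin (2 * n)) ℝ :=
  Matrix.of fun i j =>
    if (i : ℕ) + 1 = (j : ℕ) then (if (i : ℕ) % 2 = 0 then 1 else -1)
    else if (j : ℕ) + 1 = (i : ℕ) then (if (j : ℕ) % 2 = 0 then 1 else -1)
    else 0

/-- `D = diag(1, −1, 1, …, −1)` of size `2n`. -/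
def altDiag (n : ℕ) : Matrix (Fin (2 * n)) (Fin (2 * n)) ℝ :=
  Matrix.diagonal fun i => if (i : ℕ) % 2 = 0 then 1 else -1

/-- The signed adjacency matrices of `P_{2n}^k`: `APn n 0 = A_1` and
`APn n (k+1) = A_1 ⊗ I_{(2n)^(k+1)} + D ⊗ APn n k` (Kronecker products), so
`APn n k` is the matrix `A_{k+1}` of the paper; it is indexed by
`Fin (k+1) → Fin (2n)`, a type of cardinality `(2n)^(k+1)`. -/
noncomputable def APn (n : ℕ) :
    (k : ℕ) → Matrix (Fin (k + 1) → Fin (2 * n)) (Fin (k + 1) → Fin (2 * n)) ℝ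
  | 0 => Matrix.reindex (Equiv.funUnique (Fin 1) (Fin (2 * n))).symm
      (Equiv.funUnique (Fin 1) (Fin (2 * n))).symm (signedPath n)
  | (k + 1) =>
      Matrix.reindex (Fin.consEquiv fun _ : Fin (k + 2) => Fin (2 * n))
        (Fin.consEquiv fun _ : Fin (k + 2) => Fin (2 * n))
        (signedPath n ⊗ₖ
            (1 : Matrix (Fin (k + 1) → Fin (2 * n)) (Fin (k + 1) → Fin (2 * n)) ℝ)
          + altDiag n ⊗ₖ APn n k)

/-- The polynomial sequence `g_0(x) = 1`, `g_1(x) = x - 1`,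
`g_k(x) = (x-2) g_{k-1}(x) - g_{k-2}(x)`. -/
noncomputable def gPoly : ℕ → ℝ → ℝ
  | 0, _ => 1
  | 1, x => x - 1
  | (k + 2), x => (x - 2) * gPoly (k + 1) x - gPoly k x

namespace Matrix

variable {R : Type*}

section Tridiagonal

variable [CommRing R]

def tridiagLast (a b : R) (m : ℕ) : Matrix (Fin m) (Fin m) R :=
  of fun i j =>
    if (i : ℕ) = j then (if (i : ℕ) + 1 = m then b else a)
    else if (i : ℕ) + 1 = j ∨ (j : ℕ) + 1 = i then 1 else 0

variable (a b : R)

theorem tridiagLast_submatrix_succ (m : ℕ) :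
    (tridiagLast a b (m + 1)).submatrix Fin.succ Fin.succ = tridiagLast a b m := by
  ext i j
  simp only [tridiagLast, submatrix_apply, of_apply, Fin.val_succ]
  split_ifs <;> first | rfl | omega

theorem det_tridiagLast_submatrix_succ_succAbove_one (m : ℕ) :
    ((tridiagLast a b (m + 2)).submatrix Fin.succ (Fin.succAbove 1)).det =
      (tridiagLast a b m).det := by
  have hcol : Fin.succAbove (1 : Fin (m + 2)) ∘ Fin.succ = Fin.succ ∘ Fin.succ :=
    funext fun j => Fin.succAbove_of_le_castSucc _ _ (Fin.le_def.2 (by simp))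
  have hminor : ((tridiagLast a b (m + 2)).submatrix Fin.succ (Fin.succAbove 1)).submatrix
      (Fin.succAbove 0) Fin.succ = tridiagLast a b m := by
    rw [submatrix_submatrix, Fin.succAbove_zero, hcol, ← submatrix_submatrix,
      tridiagLast_submatrix_succ, tridiagLast_submatrix_succ]
  rw [det_succ_column_zero, Fin.sum_univ_succ,
    Finset.sum_eq_zero fun i _ => by simp [tridiagLast, Fin.succAbove], hminor]
  simp [tridiagLast, Fin.succAbove]

theorem det_tridiagLast_succ_succ (m : ℕ) :
    (tridiagLast a b (m + 2)).det =
      a * (tridiagLast a b (m + 1)).det - (tridiagLast a b m).det := by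
  rw [det_succ_row_zero, Fin.sum_univ_succ, Fin.sum_univ_succ,
    Finset.sum_eq_zero fun j _ => by simp [tridiagLast], Fin.succ_zero_eq_one,
    det_tridiagLast_submatrix_succ_succAbove_one, Fin.succAbove_zero,
    tridiagLast_submatrix_succ]
  simp [tridiagLast]
  ring

end Tridiagonal

variable (R) in
def shiftDown [Zero R] [One R] (m : ℕ) : Matrix (Fin m) (Fin m) R :=
  of fun i j => if (j : ℕ) + 1 = i then 1 else 0

theorem transpose_shiftDown_mul_shiftDown [Semiring R] (m : ℕ) :
    (shiftDown R m)ᵀ * shiftDown R m =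
      diagonal fun i : Fin m => if (i : ℕ) + 1 = m then 0 else 1 := by
  ext k l
  rw [mul_apply, diagonal_apply]
  by_cases hk : (k : ℕ) + 1 = m
  · rw [Finset.sum_eq_zero fun i _ => by simp [shiftDown]; omega]
    simp [hk]
  · rw [Finset.sum_eq_single ⟨k + 1, by omega⟩ (fun i _ hi => ?_) (by simp)]
    · simp [shiftDown, hk, Fin.ext_iff, eq_comm]
    · simp [shiftDown, Fin.ext_iff] at hi ⊢
      omega

theorem smul_one_sub_transpose_mul_one_sub_shiftDown [CommRing R] (x : R) (m : ℕ) :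
    x • 1 - (1 - shiftDown R m)ᵀ * (1 - shiftDown R m) = tridiagLast (x - 2) (x - 1) m := by
  have hexpand : (1 - shiftDown R m)ᵀ * (1 - shiftDown R m) =
      1 - shiftDown R m - (shiftDown R m)ᵀ + (shiftDown R m)ᵀ * shiftDown R m := by
    rw [transpose_sub, transpose_one]
    noncomm_ring
  rw [hexpand, transpose_shiftDown_mul_shiftDown]
  ext i j
  simp only [sub_apply, add_apply, smul_apply, one_apply, diagonal_apply, transpose_apply,
    shiftDown, tridiagLast, of_apply, smul_eq_mul, Fin.ext_iff]
  split_ifs <;> first | ring1 | omega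

theorem det_smul_one_sub_mul_comm {n : Type*} [Fintype n] [DecidableEq n] [CommRing R]
    (A B : Matrix n n R) (x : R) : (x • 1 - A * B).det = (x • 1 - B * A).det := by
  simpa [eval_charpoly, scalar_apply, smul_one_eq_diagonal] using
    congrArg (Polynomial.eval x) (charpoly_mul_comm A B)

end Matrix

theorem det_tridiagLast_eq_gPoly (x : ℝ) :
    (m : ℕ) → (tridiagLast (x - 2) (x - 1) m).det = gPoly m x
  | 0 => by simp [gPoly]
  | 1 => by simp [tridiagLast, gPoly]
  | m + 2 => by
    rw [det_tridiagLast_succ_succ, det_tridiagLast_eq_gPoly x (m + 1),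
      det_tridiagLast_eq_gPoly x m, gPoly]

def evenOddEquiv (n : ℕ) : Fin n ⊕ Fin n ≃ Fin (2 * n) where
  toFun := Sum.elim (fun k => ⟨2 * k, by omega⟩) (fun k => ⟨2 * k + 1, by omega⟩)
  invFun i :=
    if (i : ℕ) % 2 = 0 then .inl ⟨i / 2, by omega⟩ else .inr ⟨i / 2, by omega⟩
  left_inv := by
    rintro (k | k) <;> simp [Fin.ext_iff]; omega
  right_inv i := by
    by_cases h : (i : ℕ) % 2 = 0 <;> simp [h, Fin.ext_iff] <;> omega

theorem signedPath_submatrix_evenOddEquiv (n : ℕ) :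
    (signedPath n).submatrix (evenOddEquiv n) (evenOddEquiv n) =
      fromBlocks 0 (1 - shiftDown ℝ n) (1 - shiftDown ℝ n)ᵀ 0 := by
  ext (k | k) (l | l) <;>
    simp only [submatrix_apply, evenOddEquiv, Equiv.coe_fn_mk, Sum.elim_inl, Sum.elim_inr,
      signedPath, shiftDown, of_apply, fromBlocks_apply₁₁, fromBlocks_apply₁₂,
      fromBlocks_apply₂₁, fromBlocks_apply₂₂, transpose_apply, Matrix.sub_apply, one_apply,
      Matrix.zero_apply, Fin.ext_iff] <;>
    split_ifs <;> first | omega | norm_num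

theorem signedPath_sq_submatrix_evenOddEquiv (n : ℕ) :
    (signedPath n ^ 2).submatrix (evenOddEquiv n) (evenOddEquiv n) =
      fromBlocks ((1 - shiftDown ℝ n) * (1 - shiftDown ℝ n)ᵀ) 0
        0 ((1 - shiftDown ℝ n)ᵀ * (1 - shiftDown ℝ n)) := by
  rw [sq, ← submatrix_mul_equiv _ _ _ (evenOddEquiv n), signedPath_submatrix_evenOddEquiv,
    fromBlocks_multiply]
  simp

theorem charpoly_signedPath_sq (n : ℕ) (x : ℝ) :
    (x • (1 : Matrix (Fin (2 * n)) (Fin (2 * n)) ℝ) - (signedPath n) ^ 2).det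
      = (gPoly n x) ^ 2 := by
  set C := 1 - shiftDown ℝ n
  have hblocks : (x • 1 - signedPath n ^ 2).submatrix (evenOddEquiv n) (evenOddEquiv n) =
      fromBlocks (x • 1 - C * Cᵀ) 0 0 (x • 1 - Cᵀ * C) := by
    simp only [submatrix_sub, Pi.sub_apply, submatrix_smul, Pi.smul_apply, submatrix_one_equiv,
      signedPath_sq_submatrix_evenOddEquiv]
    rw [← fromBlocks_one, fromBlocks_smul, sub_eq_add_neg,
      fromBlocks_neg, fromBlocks_add]
    simp [C, sub_eq_add_neg]
  rw [← det_submatrix_equiv_self (evenOddEquiv n), hblocks, det_fromBlocks_zero₂₁,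
    det_smul_one_sub_mul_comm C, smul_one_sub_transpose_mul_one_sub_shiftDown,
    det_tridiagLast_eq_gPoly, sq]
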